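/- arXiv:hep-th/0407082 — 4 statements merged into one kernel-verified Lean document; each statement's English description precedes it below -/
import Mathlib

section
/- Let R be a Rota-Baxter operator of weight 1 on an associative algebra A and R̃ = id - R. Then for any x₁,...,xₙ ∈ A: ∏ᵢ R(xᵢ) = R( ∏ᵢ R(xᵢ) - (-1)ⁿ ∏ᵢ R̃(xᵢ) ), where products are taken in order of increasing index. -/
/-! Written as `R a * R b = R (R a * b + a * R b - a * b)`, the Rota-Baxter identity shows that
`p = R (p - q)` implies `R x * p = R (R x * p + R̃ x * q)`. Starting from `R xₙ = R (R xₙ + R̃ xₙ)`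
and multiplying on the left by `R xₙ₋₁, …, R x₁`, the element `q` picks up a factor `-R̃ xᵢ` at
each step, which produces the sign `(-1)ⁿ`. -/

section RotaBaxter

variable {A F : Type*} [Ring A] [FunLike F A A] [AddMonoidHomClass F A A] {R : F}

theorem rotaBaxter_mul_eq (hRB : ∀ x y : A, R x * R y + R (x * y) = R (R x * y + x * R y))
    (a b : A) : R a * R b = R (R a * b + a * R b - a * b) := by
  rw [map_sub, ← hRB, add_sub_cancel_right]

theorem rotaBaxter_mul_of_eq_sub (hRB : ∀ x y : A, R x * R y + R (x * y) = R (R x * y + x * R y))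
    {p q : A} (hp : p = R (p - q)) (x : A) : R x * p = R (R x * p + (x - R x) * q) :=
  calc R x * p = R x * R (p - q) := by rw [← hp]
    _ = R (R x * (p - q) + x * R (p - q) - x * (p - q)) := rotaBaxter_mul_eq hRB _ _
    _ = R (R x * p + (x - R x) * q) := by rw [← hp]; congr 1; noncomm_ring

theorem rotaBaxter_prod_map_cons
    (hRB : ∀ x y : A, R x * R y + R (x * y) = R (R x * y + x * R y)) (t : List A) (x : A) :
    ((x :: t).map R).prod =
      R (((x :: t).map R).prod -
        (-1 : A) ^ (x :: t).length * ((x :: t).map fun y => y - R y).prod) := by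
  induction t generalizing x with
  | nil => simp
  | cons y t ih =>
    have hsign : (x - R x) * ((-1 : A) ^ (y :: t).length * ((y :: t).map fun y => y - R y).prod) =
        -((-1 : A) ^ (x :: y :: t).length * ((x :: y :: t).map fun y => y - R y).prod) := by
      rw [List.length_cons (a := x), pow_succ, List.map_cons (a := x), List.prod_cons,
        ← mul_assoc, ((Commute.neg_one_right _).pow_right _).eq]
      noncomm_ring
    have step := rotaBaxter_mul_of_eq_sub hRB (ih y) x
    rwa [hsign, ← sub_eq_add_neg, ← List.prod_cons, ← List.map_cons] at step

theorem rotaBaxter_prod_map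
    (hRB : ∀ x y : A, R x * R y + R (x * y) = R (R x * y + x * R y)) {l : List A} (hl : l ≠ []) :
    (l.map R).prod = R ((l.map R).prod - (-1 : A) ^ l.length * (l.map fun y => y - R y).prod) := by
  obtain ⟨x, t, rfl⟩ := List.exists_cons_of_ne_nil hl
  exact rotaBaxter_prod_map_cons hRB t x

end RotaBaxter

theorem stmt_9_general {K : Type*} [Field K] {A : Type*} [Ring A] [Algebra K A]
    (R : A →ₗ[K] A)
    (hRB : ∀ x y : A, R x * R y + R (x * y) = R (R x * y + x * R y)) :
    ∀ l : List A, l ≠ [] →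
      (l.map fun x => R x).prod =
        R ((l.map fun x => R x).prod -
            (-1 : A) ^ l.length * (l.map fun x => x - R x).prod) :=
  fun _ hl => rotaBaxter_prod_map hRB hl

/-- For a weight-1 Rota-Baxter operator `R` with `R̃ = id - R` and any
`x₁, …, xₙ`: `∏ᵢ R(xᵢ) = R(∏ᵢ R(xᵢ) - (-1)ⁿ ∏ᵢ R̃(xᵢ))`, products in order
of increasing index. -/
theorem stmt_9 {K : Type*} [Field K] [CharZero K] {A : Type*} [Ring A] [Algebra K A]
    (R : A →ₗ[K] A)
    (hRB : ∀ x y : A, R x * R y + R (x * y) = R (R x * y + x * R y)) :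
    ∀ l : List A, l ≠ [] →
      (l.map fun x => R x).prod =
        R ((l.map fun x => R x).prod -
            (-1 : A) ^ l.length * (l.map fun x => x - R x).prod) :=
  stmt_9_general R hRB
end

section
/- (Kingman's formula) Let R be a Rota-Baxter operator of weight 1 on an associative algebra A and R̃ = id - R. Then for all u ∈ A and n ≥ 1: R(u)ⁿ = R( R(u)ⁿ - (-R̃(u))ⁿ ). -/
/-!
Induction on `n`. If `R v = R(u)ⁿ`, the Rota–Baxter identity for the pair `(u, v)` rewrites
`R(u)ⁿ⁺¹ = R(u) R(v)` as `R((R(u) - u) v + u R(u)ⁿ)`, and for `v = R(u)ⁿ - (-R̃(u))ⁿ` the argument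
telescopes, since `R(u) - u = -R̃(u)`, to `R(u)ⁿ⁺¹ - (-R̃(u))ⁿ⁺¹`.
-/

namespace RotaBaxter

variable {A : Type*} [Ring A] (R : A →+ A)

theorem map_mul_map
    (hRB : ∀ x y : A, R x * R y + R (x * y) = R (R x * y + x * R y)) (x y : A) :
    R x * R y = R (R x * y + x * R y - x * y) := by
  rw [map_sub, ← hRB, add_sub_cancel_right]

theorem kingman_telescope (u : A) (n : ℕ) :
    (R u - u) * (R u ^ n - (-(u - R u)) ^ n) + u * R u ^ n
      = R u ^ (n + 1) - (-(u - R u)) ^ (n + 1) := by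
  rw [pow_succ' (R u), pow_succ' (-(u - R u))]
  noncomm_ring

theorem kingman
    (hRB : ∀ x y : A, R x * R y + R (x * y) = R (R x * y + x * R y)) (u : A) :
    ∀ n : ℕ, 1 ≤ n → R u ^ n = R (R u ^ n - (-(u - R u)) ^ n) := by
  intro n hn
  induction n, hn using Nat.le_induction with
  | base => simp only [pow_one, neg_sub, sub_sub_cancel]
  | succ n _ ih =>
    calc R u ^ (n + 1) = R u * R (R u ^ n - (-(u - R u)) ^ n) := by rw [pow_succ', ← ih]
      _ = R ((R u - u) * (R u ^ n - (-(u - R u)) ^ n) + u * R u ^ n) := by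
          rw [map_mul_map R hRB, ← ih, sub_mul]
          congr 1
          abel
      _ = R (R u ^ (n + 1) - (-(u - R u)) ^ (n + 1)) := by rw [kingman_telescope]

end RotaBaxter

theorem stmt_10_general {K : Type*} [Field K] {A : Type*} [Ring A] [Algebra K A]
    (R : A →ₗ[K] A)
    (hRB : ∀ x y : A, R x * R y + R (x * y) = R (R x * y + x * R y)) :
    ∀ (u : A) (n : ℕ), 1 ≤ n → R u ^ n = R (R u ^ n - (-(u - R u)) ^ n) :=
  RotaBaxter.kingman R.toAddMonoidHom hRB

/-- Kingman's formula: `R(u)ⁿ = R(R(u)ⁿ - (-R̃(u))ⁿ)` for `n ≥ 1`, where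
`R̃ = id - R`. -/
theorem stmt_10 {K : Type*} [Field K] [CharZero K] {A : Type*} [Ring A] [Algebra K A]
    (R : A →ₗ[K] A)
    (hRB : ∀ x y : A, R x * R y + R (x * y) = R (R x * y + x * R y)) :
    ∀ (u : A) (n : ℕ), 1 ≤ n → R u ^ n = R (R u ^ n - (-(u - R u)) ^ n) :=
  stmt_10_general R hRB
end

section
/- (Atkinson) Let (A,R) be an associative unital Rota-Baxter algebra of weight 1, R̃ = id - R, and suppose b, b' ∈ A satisfy b = 1 - R(ba) and b' = 1 - R̃(ab'). Then b(1+a)b' = 1. -/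
/-!
Writing `R̃ = id - R`, the weight-one Rota–Baxter identity is equivalent to the mixed identity
`R x * R̃ y = R (x * R̃ y) + R̃ (R x * y)`. Apply it to `x = b a` and `y = a b'`, where
`R (b a) = 1 - b` and `R̃ (a b') = 1 - b'`: the left side is `(1 - b)(1 - b')`, and since
`R + R̃ = id` the right side collapses to `(1 - b) + (1 - b') - b a b'`. Comparing gives
`b b' + b a b' = 1`.
-/

universe u

section RotaBaxter

variable {A : Type u} [Ring A] (R : A →+ A)

theorem rotaBaxter_mul_id_sub
    (hRB : ∀ x y : A, R x * R y + R (x * y) = R (R x * y + x * R y)) (x y : A) :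
    R x * (y - R y) = R (x * (y - R y)) + (R x * y - R (R x * y)) := by
  have h := hRB x y
  rw [map_add] at h
  rw [mul_sub, mul_sub, map_sub]
  linear_combination (norm := abel) -h

theorem atkinson_factorization
    (hRB : ∀ x y : A, R x * R y + R (x * y) = R (R x * y + x * R y))
    (a b b' : A) (hb : b = 1 - R (b * a)) (hb' : b' = 1 - (a * b' - R (a * b'))) :
    b * (1 + a) * b' = 1 := by
  have hR : R (b * a) = 1 - b := eq_sub_iff_add_eq'.mpr (eq_sub_iff_add_eq.mp hb)
  have hR' : a * b' - R (a * b') = 1 - b' := eq_sub_iff_add_eq'.mpr (eq_sub_iff_add_eq.mp hb')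
  have key := rotaBaxter_mul_id_sub R hRB (b * a) (a * b')
  rw [hR', hR] at key
  simp only [mul_sub, sub_mul, mul_one, one_mul, map_sub, mul_assoc] at key
  linear_combination (norm := noncomm_ring) key + hR + hR'

theorem stmt_17_general {K : Type*} [Field K] {A : Type*} [Ring A] [Algebra K A]
    (R : A →ₗ[K] A)
    (hRB : ∀ x y : A, R x * R y + R (x * y) = R (R x * y + x * R y))
    (a b b' : A)
    (hb : b = 1 - R (b * a))
    (hb' : b' = 1 - (a * b' - R (a * b'))) :
    b * (1 + a) * b' = 1 := by
  exact atkinson_factorization R.toAddMonoidHom hRB a b b' hb hb'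

/-- Atkinson's theorem: if `b = 1 - R(ba)` and `b' = 1 - R̃(ab')` with
`R̃ = id - R`, then `b(1+a)b' = 1`. -/
theorem stmt_17 {K : Type*} [Field K] [CharZero K] {A : Type*} [Ring A] [Algebra K A]
    (R : A →ₗ[K] A)
    (hRB : ∀ x y : A, R x * R y + R (x * y) = R (R x * y + x * R y))
    (a b b' : A)
    (hb : b = 1 - R (b * a))
    (hb' : b' = 1 - (a * b' - R (a * b'))) :
    b * (1 + a) * b' = 1 :=
  stmt_17_general R hRB a b b' hb hb'
end RotaBaxter
end

section
/- Let (A, R, (Aₙ)) be a complete filtered unital Rota-Baxter algebra of weight 1 with R idempotent on A₁ (R² = R on A₁). Then every element of 1 + A₁ factors uniquely as (1+c)(1+c̃) with c ∈ R(A₁) and c̃ ∈ R̃(A₁), where R̃ = id - R; i.e., the group 1+A₁ is the direct product of the subgroups 1+R(A₁) and 1+R̃(A₁). -/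
/-- Birkhoff decomposition: in a complete filtered unital Rota-Baxter algebra
of weight 1 with `R` idempotent on `A₁`, every element `1 + a` of `1 + A₁`
factors uniquely as `(1 + c)(1 + c̃)` with `c ∈ R(A₁)` and `c̃ ∈ R̃(A₁)`. -/
theorem stmt_18 {A : Type*} [Ring A] [Algebra ℚ A]
    (F : ℕ → Submodule ℚ A) (hF0 : F 0 = ⊤)
    (hdec : ∀ n m : ℕ, n ≤ m → F m ≤ F n)
    (hmul : ∀ n m : ℕ, ∀ x ∈ F n, ∀ y ∈ F m, x * y ∈ F (n + m))
    (hsep : ∀ x : A, (∀ n, x ∈ F n) → x = 0)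
    (hcomp : ∀ s : ℕ → A, (∀ n, s (n + 1) - s n ∈ F n) → ∃ b : A, ∀ n, b - s n ∈ F n)
    (R : A →ₗ[ℚ] A)
    (hRB : ∀ x y : A, R x * R y + R (x * y) = R (R x * y + x * R y))
    (hRF : ∀ n : ℕ, ∀ x ∈ F n, R x ∈ F n)
    (hidem : ∀ x ∈ F 1, R (R x) = R x) :
    ∀ a ∈ F 1,
      ∃! p : A × A,
        (∃ c ∈ F 1, p.1 = R c) ∧ (∃ c ∈ F 1, p.2 = c - R c) ∧
          1 + a = (1 + p.1) * (1 + p.2) := by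
  intro a ha
  set Φ : A → A := fun b => a - R b * (b - R b) with hΦ
  have hF1 : ∀ b ∈ F 1, Φ b ∈ F 1 := by
    intro b hb
    have h2 : R b * (b - R b) ∈ F 2 :=
      hmul 1 1 (R b) (hRF 1 b hb) (b - R b) (sub_mem hb (hRF 1 b hb))
    exact sub_mem ha (hdec 1 2 (by omega) h2)
  have hcontr : ∀ n, ∀ b ∈ F 1, ∀ b' ∈ F 1, b - b' ∈ F n → Φ b - Φ b' ∈ F (n + 1) := by
    intro n b hb b' hb' hd
    have key : Φ b - Φ b' =
        -(R (b - b') * (b - R b) + R b' * ((b - b') - R (b - b'))) := by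
      simp only [hΦ, map_sub]; noncomm_ring
    rw [key]
    refine neg_mem (add_mem ?_ ?_)
    · exact hmul n 1 _ (hRF n _ hd) _ (sub_mem hb (hRF 1 b hb))
    · have := hmul 1 n _ (hRF 1 b' hb') _ (sub_mem hd (hRF n _ hd))
      simpa [Nat.add_comm] using this
  set s : ℕ → A := fun n => Nat.rec a (fun _ x => Φ x) n with hs
  have hs0 : s 0 = a := rfl
  have hsucc : ∀ n, s (n + 1) = Φ (s n) := fun n => rfl
  have hsF1 : ∀ n, s n ∈ F 1 := by
    intro n; induction n with
    | zero => exact ha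
    | succ n ih => rw [hsucc]; exact hF1 _ ih
  have hdiff : ∀ n, s (n + 1) - s n ∈ F (n + 1) := by
    intro n; induction n with
    | zero =>
      rw [hsucc, hs0]
      have h : Φ a - a = -(R a * (a - R a)) := by simp only [hΦ]; abel
      rw [h]
      exact hdec 1 2 (by omega)
        (neg_mem (hmul 1 1 _ (hRF 1 a ha) _ (sub_mem ha (hRF 1 a ha))))
    | succ n ih =>
      exact hcontr (n + 1) (s (n + 1)) (hsF1 (n + 1)) (s n) (hsF1 n) ih
  obtain ⟨b, hb⟩ := hcomp s (fun n => hdec n (n + 1) (by omega) (hdiff n))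
  have hbF1 : b ∈ F 1 := by
    have h : b = (b - s 1) + s 1 := by abel
    rw [h]; exact add_mem (hb 1) (hsF1 1)
  have hbfix : b = Φ b := by
    have hz : b - Φ b = 0 := by
      apply hsep
      intro n
      have h1 : b - s (n + 1) ∈ F (n + 1) := hb (n + 1)
      have h2 : Φ (s n) - Φ b ∈ F (n + 1) := by
        apply hcontr n _ (hsF1 n) _ hbF1
        have := neg_mem (hb n)
        simpa using this
      have h3 : b - Φ b = (b - s (n + 1)) + (Φ (s n) - Φ b) := by
        rw [hsucc]; abel
      rw [h3]
      exact hdec n (n + 1) (by omega) (add_mem h1 h2)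
    exact sub_eq_zero.mp hz
  have hfixuniq : ∀ e ∈ F 1, e = Φ e → e = b := by
    intro e he hefix
    have hall : ∀ n, e - b ∈ F n := by
      intro n; induction n with
      | zero => rw [hF0]; trivial
      | succ n ih =>
        have h : e - b = Φ e - Φ b := by rw [← hefix, ← hbfix]
        rw [h]; exact hcontr n _ he _ hbF1 ih
    have := hsep _ hall
    exact sub_eq_zero.mp this
  have hprod : 1 + a = (1 + R b) * (1 + (b - R b)) := by
    have h := hbfix
    simp only [hΦ] at h
    have h' : b + R b * (b - R b) = a := eq_sub_iff_add_eq.mp h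
    rw [← h']; noncomm_ring
  refine ⟨(R b, b - R b), ⟨⟨b, hbF1, rfl⟩, ⟨b, hbF1, rfl⟩, hprod⟩, ?_⟩
  rintro ⟨x₁, x₂⟩ ⟨⟨c, hc, hx₁⟩, ⟨c', hc', hx₂⟩, heq⟩
  simp only at hx₁ hx₂ heq ⊢
  have hx₁F : x₁ ∈ F 1 := hx₁ ▸ hRF 1 c hc
  have hx₂F : x₂ ∈ F 1 := hx₂ ▸ sub_mem hc' (hRF 1 c' hc')
  have hRx₁ : R x₁ = x₁ := by rw [hx₁]; exact hidem c hc
  have hRx₂ : R x₂ = 0 := by rw [hx₂, map_sub, hidem c' hc', sub_self]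
  set e : A := x₁ + x₂ with he
  have heF1 : e ∈ F 1 := add_mem hx₁F hx₂F
  have hRe : R e = x₁ := by rw [he, map_add, hRx₁, hRx₂, add_zero]
  have ha' : a = x₁ + x₂ + x₁ * x₂ := by
    have h := heq
    rw [show (1 + x₁) * (1 + x₂) = 1 + (x₁ + x₂ + x₁ * x₂) from by noncomm_ring] at h
    exact add_left_cancel h
  have hefix : e = Φ e := by
    simp only [hΦ, hRe, he, ha', show R (x₁ + x₂) = x₁ from hRe]
    noncomm_ring
  have heb : e = b := hfixuniq e heF1 hefix
  have h1 : x₁ = R b := by rw [← heb, hRe]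
  have h2 : x₂ = b - R b := by rw [← heb, hRe, he]; abel
  exact Prod.ext h1 h2
end
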